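/- arXiv:1211.2857 — 4 statements merged into one kernel-verified Lean document; each statement's English description precedes it below -/
import Mathlib

section
/- Let A be an associative unital ℂ-algebra containing elements E_{pq} for 1 ≤ p,q ≤ m+n+1 satisfying the graded gl(m|n+1) commutation relations (with (p)=0 for p ≤ m and (p)=1 for p > m). Suppose χ^1,...,χ^{m+n} ∈ A satisfy the odd vector operator law with respect to the gl(m|n) subalgebra: E_{pq}χ^r − (−1)^{((p)+(q))((r)+1)} χ^r E_{pq} = (−1)^{(p)+(q)} δ_{qr} χ^p for all 1 ≤ p,q,r ≤ m+n. Then the element γ = Σ_{q=1}^{m+n} E_{m+n+1,q} χ^q commutes with E_{pq} for all 1 ≤ p,q ≤ m+n: [E_{pq}, γ] = 0. -/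
open Finset

lemma helper_12 {A : Type*} [Ring A] [Algebra ℂ A] (c ε : ℂ) (hc : c * c = 1)
    (X Y Z T1 T2 : A)
    (h1 : X * Y - c • (Y * X) = - (c • T2))
    (h2 : X * Z - c • (Z * X) = ε • T1) :
    X * (Y * Z) - (Y * Z) * X = (c * ε) • (Y * T1) - c • (T2 * Z) := by
  have h1' : X * Y = - (c • T2) + c • (Y * X) := sub_eq_iff_eq_add.mp h1
  have h2' : X * Z = ε • T1 + c • (Z * X) := sub_eq_iff_eq_add.mp h2
  rw [← mul_assoc, h1', add_mul, smul_mul_assoc, mul_assoc, h2']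
  simp only [mul_add, smul_add, smul_mul_assoc, mul_smul_comm, smul_smul, hc, one_smul,
    neg_mul, mul_assoc]
  abel

theorem stmt_12 (m n : ℕ) (hm : 0 < m) (hn : 0 < n)
    {A : Type*} [Ring A] [Algebra ℂ A]
    (E : Fin (m + n + 1) → Fin (m + n + 1) → A)
    (par : Fin (m + n + 1) → ℕ)
    (hpar : ∀ p, par p = if (p : ℕ) < m then 0 else 1)
    (hE : ∀ p q r s, E p q * E r s
        - ((-1 : ℂ) ^ ((par p + par q) * (par r + par s))) • (E r s * E p q)
      = (if q = r then E p s else 0)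
        - ((-1 : ℂ) ^ ((par p + par q) * (par r + par s))) • (if p = s then E r q else 0))
    (χ : Fin (m + n) → A)
    (hχ : ∀ p q r : Fin (m + n),
      E p.castSucc q.castSucc * χ r
        - ((-1 : ℂ) ^ ((par p.castSucc + par q.castSucc) * (par r.castSucc + 1))) •
            (χ r * E p.castSucc q.castSucc)
      = ((-1 : ℂ) ^ (par p.castSucc + par q.castSucc)) • (if q = r then χ p else 0)) :
    ∀ p q : Fin (m + n),
      E p.castSucc q.castSucc
          * (∑ s : Fin (m + n), E (Fin.last (m + n)) s.castSucc * χ s)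
        - (∑ s : Fin (m + n), E (Fin.last (m + n)) s.castSucc * χ s)
          * E p.castSucc q.castSucc
      = 0 := by
  intro p q
  set L := Fin.last (m + n) with hL
  have hparL : par L = 1 := by
    rw [hpar]
    simp [hL, Fin.last]
  set a := par p.castSucc + par q.castSucc with ha
  -- per-summand identity
  have key : ∀ s : Fin (m + n),
      E p.castSucc q.castSucc * (E L s.castSucc * χ s)
        - (E L s.castSucc * χ s) * E p.castSucc q.castSucc
      = ((-1 : ℂ) ^ (a * (par s.castSucc + 1)) * (-1) ^ a) •
          (E L s.castSucc * (if q = s then χ p else 0))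
        - ((-1 : ℂ) ^ (a * (par s.castSucc + 1))) •
          ((if p = s then E L q.castSucc else 0) * χ s) := by
    intro s
    have hc : ((-1 : ℂ) ^ (a * (par s.castSucc + 1))) *
        ((-1 : ℂ) ^ (a * (par s.castSucc + 1))) = 1 := by
      rw [← pow_add]
      exact (neg_one_pow_eq_one_iff_even (by norm_num)).mpr (by exact Even.add_self _)
    have h1 := hE p.castSucc q.castSucc L s.castSucc
    have hqL : (q.castSucc : Fin (m + n + 1)) ≠ L := (Fin.castSucc_lt_last q).ne
    have hps : ((p.castSucc : Fin (m + n + 1)) = s.castSucc) ↔ p = s :=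
      Fin.castSucc_inj
    rw [if_neg hqL, hparL, add_comm 1 (par s.castSucc)] at h1
    simp only [← ha] at h1
    rw [zero_sub] at h1
    have h1' : E p.castSucc q.castSucc * E L s.castSucc
        - ((-1 : ℂ) ^ (a * (par s.castSucc + 1))) • (E L s.castSucc * E p.castSucc q.castSucc)
        = - (((-1 : ℂ) ^ (a * (par s.castSucc + 1))) • (if p = s then E L q.castSucc else 0)) := by
      rw [h1]
      congr 1
      congr 1
      simp [hps]
    have h2 := hχ p q s
    simp only [← ha] at h2
    exact helper_12 _ _ hc _ _ _ _ _ h1' h2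
  rw [Finset.mul_sum, Finset.sum_mul, ← Finset.sum_sub_distrib]
  rw [Finset.sum_congr rfl (fun s _ => key s)]
  rw [Finset.sum_sub_distrib]
  have e1 : ∑ s : Fin (m + n), ((-1 : ℂ) ^ (a * (par s.castSucc + 1)) * (-1) ^ a) •
      (E L s.castSucc * (if q = s then χ p else 0))
      = ((-1 : ℂ) ^ (a * (par q.castSucc + 1)) * (-1) ^ a) • (E L q.castSucc * χ p) := by
    rw [Finset.sum_eq_single q]
    · simp
    · intro s _ hs
      simp [(Ne.symm hs : ¬ q = s)]
    · simp
  have e2 : ∑ s : Fin (m + n), ((-1 : ℂ) ^ (a * (par s.castSucc + 1))) •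
      ((if p = s then E L q.castSucc else 0) * χ s)
      = ((-1 : ℂ) ^ (a * (par p.castSucc + 1))) • (E L q.castSucc * χ p) := by
    rw [Finset.sum_eq_single p]
    · simp
    · intro s _ hs
      simp [(Ne.symm hs : ¬ p = s)]
    · simp
  rw [e1, e2, sub_eq_zero]
  congr 1
  -- sign identity
  rw [← pow_add]
  have hq' : par q.castSucc = if (q : ℕ) < m then 0 else 1 := by
    rw [hpar]; simp
  have hp' : par p.castSucc = if (p : ℕ) < m then 0 else 1 := by
    rw [hpar]; simp
  rcases lt_or_ge (p : ℕ) m with h1 | h1 <;> rcases lt_or_ge (q : ℕ) m with h2 | h2 <;>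
    simp [ha, hp', hq', h1, h2, Nat.not_lt.mpr, pow_add, pow_mul] <;> norm_num
end

section
/- Let A be an associative unital ℂ-algebra containing elements E_{pq} for 1 ≤ p,q ≤ m+n+1 satisfying the graded gl(m|n+1) commutation relations. Let ℬ^p_{\ q} = (−1)^{(p)} E_{pq}, define powers (ℬ^k)^p_q = Σ_r ℬ^p_r (ℬ^{k-1})^r_q with ℬ^0 the identity matrix, and set τ_k = (ℬ^k)^{m+n+1}_{m+n+1}. Then the elements τ_1, τ_2, τ_3, ... pairwise commute: τ_ℓ τ_k = τ_k τ_ℓ for all k, ℓ ≥ 1. -/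
open Finset

set_option linter.unusedSectionVars false
section
variable {A : Type*} [Ring A] [Algebra ℂ A]

lemma sgn_eq_of_even (x y : ℕ) (h : Even (x + y)) : ((-1 : ℂ)) ^ x = (-1) ^ y := by
  have h2 : Even x ↔ Even y := Nat.even_add.mp h
  rcases Nat.even_or_odd x with hx | hx
  · rw [hx.neg_one_pow, (h2.mp hx).neg_one_pow]
  · rcases Nat.even_or_odd y with hy | hy
    · exact absurd (h2.mpr hy) ((Nat.not_even_iff_odd).mpr hx)
    · rw [hx.neg_one_pow, hy.neg_one_pow]

lemma sq1 (x : ℕ) : ((-1:ℂ))^x * (-1)^x = 1 := by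
  rw [← pow_add]; exact Even.neg_one_pow ⟨x, rfl⟩

lemma leib (e x y : A) (c d : ℂ) :
    e * (x * y) - (c * d) • (x * y * e)
      = (e * x - c • (x * e)) * y + c • (x * (e * y - d • (y * e))) := by
  simp only [sub_mul, smul_mul_assoc, mul_sub, smul_sub, smul_smul, mul_smul_comm, mul_assoc]
  abel

lemma comm_smul (e y : A) (w c : ℂ) :
    e * (w • y) - c • (w • y * e) = w • (e * y - c • (y * e)) := by
  simp only [mul_smul_comm, smul_mul_assoc, smul_sub, smul_smul]
  rw [mul_comm c w]

lemma ringid (x y t : A) :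
    x * y * t - t * (x * y) = (x * t - t * x) * y + x * (y * t - t * y) := by
  noncomm_ring

variable {N : ℕ} (E : Fin (N+1) → Fin (N+1) → A) (par : Fin (N+1) → ℕ)
    (B : Matrix (Fin (N+1)) (Fin (N+1)) A)
    (hE : ∀ p q r s, E p q * E r s
        - ((-1 : ℂ) ^ ((par p + par q) * (par r + par s))) • (E r s * E p q)
      = (if q = r then E p s else 0)
        - ((-1 : ℂ) ^ ((par p + par q) * (par r + par s))) • (if p = s then E r q else 0))
    (hB : ∀ p q, B p q = ((-1 : ℂ) ^ (par p)) • E p q)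

include hE hB in
lemma keyM (p q : Fin (N+1)) : ∀ k, 1 ≤ k → ∀ r,
    E p q * (B ^ k) r (Fin.last N)
      - ((-1 : ℂ) ^ ((par p + par q) * (par r + par (Fin.last N)))) •
        ((B ^ k) r (Fin.last N) * E p q)
    = (if q = r then ((-1 : ℂ) ^ (par p + par q)) • (B ^ k) p (Fin.last N) else 0)
      - (if p = Fin.last N then
          ((-1 : ℂ) ^ ((par p + par q) * (par r + par (Fin.last N)))) • (B ^ k) r q else 0) := by
  intro k hk
  induction k, hk using Nat.le_induction with
  | base =>
    intro r
    simp only [pow_one]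
    rw [hB r (Fin.last N), comm_smul, hE p q r (Fin.last N), hB p (Fin.last N), hB r q,
      smul_sub]
    congr 1
    · rcases eq_or_ne q r with h1 | h1
      · rw [if_pos h1, if_pos h1, smul_smul, ← pow_add]
        exact congrArg (· • E p (Fin.last N)) (sgn_eq_of_even _ _ ⟨par p + par q, by rw [h1]; ring⟩)
      · rw [if_neg h1, if_neg h1, smul_zero]
    · rcases eq_or_ne p (Fin.last N) with h2 | h2
      · rw [if_pos h2, if_pos h2, smul_smul, smul_smul, mul_comm]
      · rw [if_neg h2, if_neg h2, smul_zero, smul_zero]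
  | succ k hk IH =>
    intro r
    have hpow : ∀ (u v : Fin (N+1)), (B ^ (k+1)) u v = ∑ t, B u t * (B ^ k) t v := by
      intro u v; rw [pow_succ', Matrix.mul_apply]
    have hsum1 : ∀ (u v : Fin (N+1)), (∑ t, E u t * (B ^ k) t v)
        = ((-1:ℂ) ^ par u) • (B ^ (k+1)) u v := by
      intro u v
      rw [hpow, Finset.smul_sum]
      refine Finset.sum_congr rfl fun t _ => ?_
      rw [hB u t, smul_mul_assoc, smul_smul, sq1, one_smul]
    calc E p q * (B ^ (k+1)) r (Fin.last N)
          - ((-1 : ℂ) ^ ((par p + par q) * (par r + par (Fin.last N)))) •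
            ((B ^ (k+1)) r (Fin.last N) * E p q)
        = ∑ t, (E p q * (B r t * (B ^ k) t (Fin.last N))
            - (((-1:ℂ) ^ ((par p + par q) * (par r + par t))) *
               ((-1:ℂ) ^ ((par p + par q) * (par t + par (Fin.last N))))) •
              (B r t * (B ^ k) t (Fin.last N) * E p q)) := by
          rw [hpow, Finset.mul_sum, Finset.sum_mul, Finset.smul_sum, ← Finset.sum_sub_distrib]
          refine Finset.sum_congr rfl fun t _ => ?_
          congr 2
          rw [← pow_add]
          exact sgn_eq_of_even _ _
            ⟨(par p + par q) * par r + (par p + par q) * par (Fin.last N) + (par p + par q) * par t,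
             by ring⟩
      _ = ∑ t, ((((-1:ℂ) ^ par r) • ((if q = r then E p t else 0)
              - ((-1:ℂ) ^ ((par p + par q) * (par r + par t))) • (if p = t then E r q else 0)))
                * (B ^ k) t (Fin.last N)
            + ((-1:ℂ) ^ ((par p + par q) * (par r + par t))) •
              (B r t * ((if q = t then ((-1:ℂ) ^ (par p + par q)) • (B ^ k) p (Fin.last N) else 0)
                - (if p = Fin.last N then
                    ((-1:ℂ) ^ ((par p + par q) * (par t + par (Fin.last N)))) • (B ^ k) t q else 0)))) := by
          refine Finset.sum_congr rfl fun t _ => ?_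
          rw [leib]
          congr 1
          · congr 1
            rw [hB r t, comm_smul, hE p q r t]
          · rw [IH t]
      _ = ∑ t, ((if q = r then ((-1:ℂ) ^ par r) • (E p t * (B ^ k) t (Fin.last N)) else 0)
            - (if p = t then (((-1:ℂ) ^ par r) * ((-1:ℂ) ^ ((par p + par q) * (par r + par t)))) •
                (E r q * (B ^ k) t (Fin.last N)) else 0)
            + ((if q = t then (((-1:ℂ) ^ ((par p + par q) * (par r + par t))) * ((-1:ℂ) ^ (par p + par q))) •
                (B r t * (B ^ k) p (Fin.last N)) else 0)
            - (if p = Fin.last N then (((-1:ℂ) ^ ((par p + par q) * (par r + par t))) *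
                ((-1:ℂ) ^ ((par p + par q) * (par t + par (Fin.last N))))) • (B r t * (B ^ k) t q) else 0))) := by
          refine Finset.sum_congr rfl fun t _ => ?_
          simp only [smul_sub, sub_mul, mul_sub, smul_ite, smul_zero, ite_mul, zero_mul,
            mul_ite, mul_zero, smul_smul, smul_mul_assoc, mul_smul_comm]
      _ = (∑ t, (if q = r then ((-1:ℂ) ^ par r) • (E p t * (B ^ k) t (Fin.last N)) else 0))
            - (∑ t, (if p = t then (((-1:ℂ) ^ par r) * ((-1:ℂ) ^ ((par p + par q) * (par r + par t)))) •
                (E r q * (B ^ k) t (Fin.last N)) else 0))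
            + ((∑ t, (if q = t then (((-1:ℂ) ^ ((par p + par q) * (par r + par t))) * ((-1:ℂ) ^ (par p + par q))) •
                (B r t * (B ^ k) p (Fin.last N)) else 0))
            - (∑ t, (if p = Fin.last N then (((-1:ℂ) ^ ((par p + par q) * (par r + par t))) *
                ((-1:ℂ) ^ ((par p + par q) * (par t + par (Fin.last N))))) • (B r t * (B ^ k) t q) else 0))) := by
          rw [← Finset.sum_sub_distrib, ← Finset.sum_sub_distrib, ← Finset.sum_add_distrib]
      _ = (if q = r then ((-1 : ℂ) ^ (par p + par q)) • (B ^ (k+1)) p (Fin.last N) else 0)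
          - (if p = Fin.last N then
              ((-1 : ℂ) ^ ((par p + par q) * (par r + par (Fin.last N)))) • (B ^ (k+1)) r q else 0) := by
          have h2sum : (∑ t, (if p = t then (((-1:ℂ) ^ par r) * ((-1:ℂ) ^ ((par p + par q) * (par r + par t)))) •
                (E r q * (B ^ k) t (Fin.last N)) else 0))
              = (((-1:ℂ) ^ par r) * ((-1:ℂ) ^ ((par p + par q) * (par r + par p)))) •
                (E r q * (B ^ k) p (Fin.last N)) := by
            simp [Finset.sum_ite_eq]
          have h3sum : (∑ t, (if q = t then (((-1:ℂ) ^ ((par p + par q) * (par r + par t))) * ((-1:ℂ) ^ (par p + par q))) •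
                (B r t * (B ^ k) p (Fin.last N)) else 0))
              = (((-1:ℂ) ^ ((par p + par q) * (par r + par q))) * ((-1:ℂ) ^ (par p + par q))) •
                (B r q * (B ^ k) p (Fin.last N)) := by
            simp [Finset.sum_ite_eq]
          have h23 : (((-1:ℂ) ^ ((par p + par q) * (par r + par q))) * ((-1:ℂ) ^ (par p + par q))) •
                (B r q * (B ^ k) p (Fin.last N))
              = (((-1:ℂ) ^ par r) * ((-1:ℂ) ^ ((par p + par q) * (par r + par p)))) •
                (E r q * (B ^ k) p (Fin.last N)) := by
            rw [hB r q, smul_mul_assoc, smul_smul]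
            refine congrArg (· • (E r q * (B ^ k) p (Fin.last N))) ?_
            rw [← pow_add, ← pow_add, ← pow_add]
            refine sgn_eq_of_even _ _ ?_
            simp only [Nat.even_add, Nat.even_mul]
            tauto
          rw [h2sum, h3sum, h23, sub_add_sub_cancel]
          congr 1
          · by_cases h1 : q = r
            · simp only [if_pos h1]
              rw [← Finset.smul_sum, hsum1 p (Fin.last N), smul_smul, ← pow_add]
              exact congrArg (· • (B ^ (k+1)) p (Fin.last N))
                (sgn_eq_of_even _ _ ⟨par p + par q, by rw [h1]; ring⟩)
            · simp only [if_neg h1, Finset.sum_const_zero]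
          · by_cases h4 : p = Fin.last N
            · simp only [if_pos h4]
              calc (∑ t, (((-1:ℂ) ^ ((par p + par q) * (par r + par t))) *
                    ((-1:ℂ) ^ ((par p + par q) * (par t + par (Fin.last N))))) • (B r t * (B ^ k) t q))
                  = ∑ t, ((-1 : ℂ) ^ ((par p + par q) * (par r + par (Fin.last N)))) •
                      (B r t * (B ^ k) t q) := by
                    refine Finset.sum_congr rfl fun t _ => ?_
                    rw [← pow_add]
                    exact congrArg (· • (B r t * (B ^ k) t q))
                      (sgn_eq_of_even _ _
                        ⟨(par p + par q) * par r + (par p + par q) * par t +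
                          (par p + par q) * par (Fin.last N), by ring⟩)
                _ = ((-1 : ℂ) ^ ((par p + par q) * (par r + par (Fin.last N)))) • (B ^ (k+1)) r q := by
                    rw [← Finset.smul_sum, hpow r q]
            · simp only [if_neg h4, Finset.sum_const_zero]

include hE hB in
lemma cornerB (hpl : par (Fin.last N) = 1) (k : ℕ) (hk : 1 ≤ k) (t q : Fin (N+1)) :
    B t q * (B ^ k) (Fin.last N) (Fin.last N) - (B ^ k) (Fin.last N) (Fin.last N) * B t q
      = (if t = Fin.last N then (B ^ k) (Fin.last N) q else 0)
        - (if q = Fin.last N then (B ^ k) t (Fin.last N) else 0) := by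
  have h := keyM E par B hE hB t q k hk (Fin.last N)
  have hS : ((-1:ℂ)) ^ ((par t + par q) * (par (Fin.last N) + par (Fin.last N))) = 1 := by
    rw [sgn_eq_of_even _ 0 (by simp only [Nat.even_add, Nat.even_mul]; tauto), pow_zero]
  rw [hS, one_smul, one_smul] at h
  rw [hB t q, smul_mul_assoc, mul_smul_comm, ← smul_sub, h, smul_sub]
  have hX : ((-1:ℂ) ^ (par t)) • (if q = Fin.last N then ((-1:ℂ) ^ (par t + par q)) • (B ^ k) t (Fin.last N) else 0)
      = -(if q = Fin.last N then (B ^ k) t (Fin.last N) else 0) := by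
    rcases eq_or_ne q (Fin.last N) with h1 | h1
    · rw [if_pos h1, if_pos h1, smul_smul, ← pow_add]
      have hodd : Odd (par t + (par t + par q)) := by
        rw [h1, hpl]; exact ⟨par t, by ring⟩
      rw [hodd.neg_one_pow, neg_one_smul]
    · rw [if_neg h1, if_neg h1, smul_zero, neg_zero]
  have hY : ((-1:ℂ) ^ (par t)) • (if t = Fin.last N then (B ^ k) (Fin.last N) q else 0)
      = -(if t = Fin.last N then (B ^ k) (Fin.last N) q else 0) := by
    rcases eq_or_ne t (Fin.last N) with h1 | h1
    · rw [if_pos h1, h1, hpl, pow_one, neg_one_smul]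
    · rw [if_neg h1, smul_zero, neg_zero]
  rw [hX, hY]
  abel

include hE hB in
lemma Gclosed (hpl : par (Fin.last N) = 1) (k : ℕ) (hk : 1 ≤ k) :
    ∀ a, ∀ q : Fin (N+1), (B ^ a) (Fin.last N) q * (B ^ k) (Fin.last N) (Fin.last N)
        - (B ^ k) (Fin.last N) (Fin.last N) * (B ^ a) (Fin.last N) q
      = ∑ j ∈ range a, ((B ^ j) (Fin.last N) (Fin.last N) * (B ^ (a - 1 - j + k)) (Fin.last N) q
          - (B ^ (k + j)) (Fin.last N) (Fin.last N) * (B ^ (a - 1 - j)) (Fin.last N) q) := by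
  intro a
  induction a with
  | zero =>
    intro q
    simp only [pow_zero, range_zero, Finset.sum_empty, Matrix.one_apply]
    split_ifs <;> simp
  | succ a IHa =>
    intro q
    have hpow2 : (B ^ (a+1)) (Fin.last N) q = ∑ t, (B ^ a) (Fin.last N) t * B t q := by
      rw [pow_succ, Matrix.mul_apply]
    have hpowr : ∀ (j : ℕ) (v : Fin (N+1)), (∑ t, (B ^ j) (Fin.last N) t * B t v) = (B ^ (j+1)) (Fin.last N) v := by
      intro j v; rw [pow_succ, Matrix.mul_apply]
    rw [hpow2, Finset.sum_mul, Finset.mul_sum, ← Finset.sum_sub_distrib]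
    calc (∑ t, ((B ^ a) (Fin.last N) t * B t q * (B ^ k) (Fin.last N) (Fin.last N)
            - (B ^ k) (Fin.last N) (Fin.last N) * ((B ^ a) (Fin.last N) t * B t q)))
        = ∑ t, (((B ^ a) (Fin.last N) t * (B ^ k) (Fin.last N) (Fin.last N)
              - (B ^ k) (Fin.last N) (Fin.last N) * (B ^ a) (Fin.last N) t) * B t q
            + (B ^ a) (Fin.last N) t * (B t q * (B ^ k) (Fin.last N) (Fin.last N)
              - (B ^ k) (Fin.last N) (Fin.last N) * B t q)) :=
          Finset.sum_congr rfl fun t _ => ringid _ _ _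
      _ = ∑ t, ((∑ j ∈ range a, ((B ^ j) (Fin.last N) (Fin.last N) * (B ^ (a - 1 - j + k)) (Fin.last N) t
              - (B ^ (k + j)) (Fin.last N) (Fin.last N) * (B ^ (a - 1 - j)) (Fin.last N) t)) * B t q
            + (B ^ a) (Fin.last N) t * ((if t = Fin.last N then (B ^ k) (Fin.last N) q else 0)
              - (if q = Fin.last N then (B ^ k) t (Fin.last N) else 0))) := by
          refine Finset.sum_congr rfl fun t _ => ?_
          rw [IHa t, cornerB E par B hE hB hpl k hk t q]
      _ = (∑ j ∈ range a, ((B ^ j) (Fin.last N) (Fin.last N) * (B ^ (a - j + k)) (Fin.last N) q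
              - (B ^ (k + j)) (Fin.last N) (Fin.last N) * (B ^ (a - j)) (Fin.last N) q))
          + ((B ^ a) (Fin.last N) (Fin.last N) * (B ^ k) (Fin.last N) q
              - (if q = Fin.last N then (B ^ (a + k)) (Fin.last N) (Fin.last N) else 0)) := by
          rw [Finset.sum_add_distrib]
          congr 1
          · simp only [Finset.sum_mul]
            rw [Finset.sum_comm]
            refine Finset.sum_congr rfl fun j hj => ?_
            have hj' := Finset.mem_range.mp hj
            simp only [sub_mul, mul_assoc]
            rw [Finset.sum_sub_distrib, ← Finset.mul_sum, ← Finset.mul_sum, hpowr, hpowr]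
            have e1 : a - 1 - j + k + 1 = a - j + k := by omega
            have e2 : a - 1 - j + 1 = a - j := by omega
            rw [e1, e2]
          · simp only [mul_sub, mul_ite, mul_zero]
            rw [Finset.sum_sub_distrib]
            congr 1
            · rw [Finset.sum_ite_eq']
              simp
            · by_cases hq : q = Fin.last N
              · simp only [if_pos hq]
                rw [pow_add, Matrix.mul_apply]
              · simp only [if_neg hq, Finset.sum_const_zero]
      _ = ∑ j ∈ range (a+1), ((B ^ j) (Fin.last N) (Fin.last N) * (B ^ (a + 1 - 1 - j + k)) (Fin.last N) q
            - (B ^ (k + j)) (Fin.last N) (Fin.last N) * (B ^ (a + 1 - 1 - j)) (Fin.last N) q) := by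
          rw [Finset.sum_range_succ]
          simp only [Nat.add_sub_cancel]
          congr 1
          simp only [Nat.sub_self, pow_zero, zero_add, Matrix.one_apply]
          congr 1
          by_cases hq : q = Fin.last N
          · rw [if_pos hq, hq, if_pos rfl, mul_one, Nat.add_comm k a]
          · rw [if_neg hq, if_neg (fun h => hq h.symm), mul_zero]

include hE hB in
lemma mainComm (hpl : par (Fin.last N) = 1) :
    ∀ l k : ℕ, (B ^ l) (Fin.last N) (Fin.last N) * (B ^ k) (Fin.last N) (Fin.last N)
      = (B ^ k) (Fin.last N) (Fin.last N) * (B ^ l) (Fin.last N) (Fin.last N) := by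
  intro l
  induction l using Nat.strong_induction_on with
  | _ l IH =>
    intro k
    rcases l with _ | a
    · simp [Matrix.one_apply]
    · rcases k with _ | b
      · simp [Matrix.one_apply]
      · rw [← sub_eq_zero,
          Gclosed E par B hE hB hpl (b+1) (Nat.succ_le_succ (Nat.zero_le b)) (a+1) (Fin.last N)]
        simp only [Nat.add_sub_cancel]
        rw [Finset.sum_sub_distrib]
        have hrefl : (∑ j ∈ range (a+1), (B ^ j) (Fin.last N) (Fin.last N) *
              (B ^ (a - j + (b+1))) (Fin.last N) (Fin.last N))
            = ∑ j ∈ range (a+1), (B ^ (a - j)) (Fin.last N) (Fin.last N) *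
              (B ^ (j + (b+1))) (Fin.last N) (Fin.last N) := by
          calc (∑ j ∈ range (a+1), (B ^ j) (Fin.last N) (Fin.last N) *
              (B ^ (a - j + (b+1))) (Fin.last N) (Fin.last N))
              = ∑ j ∈ range (a+1), (B ^ (a - (a + 1 - 1 - j))) (Fin.last N) (Fin.last N) *
                (B ^ ((a + 1 - 1 - j) + (b+1))) (Fin.last N) (Fin.last N) := by
                refine Finset.sum_congr rfl fun j hj => ?_
                have hj' := Finset.mem_range.mp hj
                rw [show a + 1 - 1 - j = a - j from by omega, show a - (a - j) = j from by omega]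
            _ = _ := Finset.sum_range_reflect
                (fun i => (B ^ (a - i)) (Fin.last N) (Fin.last N) *
                  (B ^ (i + (b+1))) (Fin.last N) (Fin.last N)) (a+1)
        rw [hrefl, ← Finset.sum_sub_distrib]
        apply Finset.sum_eq_zero
        intro j hj
        have hj' := Finset.mem_range.mp hj
        rw [IH (a - j) (by omega) (j + (b+1)), show (b+1) + j = j + (b+1) from by omega, sub_self]
end


theorem stmt_13 (m n : ℕ) (hm : 0 < m) (hn : 0 < n)
    {A : Type*} [Ring A] [Algebra ℂ A]
    (E : Fin (m + n + 1) → Fin (m + n + 1) → A)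
    (par : Fin (m + n + 1) → ℕ)
    (hpar : ∀ p, par p = if (p : ℕ) < m then 0 else 1)
    (hE : ∀ p q r s, E p q * E r s
        - ((-1 : ℂ) ^ ((par p + par q) * (par r + par s))) • (E r s * E p q)
      = (if q = r then E p s else 0)
        - ((-1 : ℂ) ^ ((par p + par q) * (par r + par s))) • (if p = s then E r q else 0))
    (B : Matrix (Fin (m + n + 1)) (Fin (m + n + 1)) A)
    (hB : ∀ p q, B p q = ((-1 : ℂ) ^ (par p)) • E p q)
    (τ : ℕ → A)
    (hτ : ∀ k, τ k = (B ^ k) (Fin.last (m + n)) (Fin.last (m + n))) :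
    ∀ k ℓ, 1 ≤ k → 1 ≤ ℓ → τ ℓ * τ k = τ k * τ ℓ := by

  intro k ℓ _ _
  have hpl : par (Fin.last (m + n)) = 1 := by
    rw [hpar]
    simp only [Fin.val_last]
    rw [if_neg (by omega)]
  rw [hτ, hτ, mainComm E par B hE hB hpl]
end

section
/- Let A be an associative unital ℂ-algebra containing elements E_{pq} for 1 ≤ p,q ≤ m+n+1 satisfying the graded gl(m|n+1) commutation relations. Define ℬ^p_q = (−1)^{(p)} E_{pq}, the gl(m|n) submatrix 𝒜^p_q = ℬ^p_q for 1 ≤ p,q ≤ m+n, τ_k = (ℬ^k)^+_+ (+ = m+n+1), and σ_ℓ = Σ_{1≤p,q≤m+n} ℬ^+_p (𝒜^ℓ)^p_q ℬ^q_+. Then σ_2 = τ_4 − τ_1τ_3 − τ_2τ_2 − τ_3τ_1 + τ_1τ_1τ_2 + τ_1τ_2τ_1 + τ_2τ_1τ_1 − τ_1^4. -/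
open Finset

lemma IE3 {M : Type*} [AddCommGroup M] (N : ℕ) (f : Fin (N+1) → Fin (N+1) → Fin (N+1) → M) :
    ∑ c : Fin N, ∑ b : Fin N, ∑ a : Fin N, f a.castSucc b.castSucc c.castSucc
      = (∑ c : Fin (N+1), ∑ b : Fin (N+1), ∑ a : Fin (N+1), f a b c)
        - (∑ c : Fin (N+1), ∑ b : Fin (N+1), f (Fin.last N) b c)
        - (∑ c : Fin (N+1), ∑ a : Fin (N+1), f a (Fin.last N) c)
        - (∑ b : Fin (N+1), ∑ a : Fin (N+1), f a b (Fin.last N))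
        + (∑ c : Fin (N+1), f (Fin.last N) (Fin.last N) c)
        + (∑ b : Fin (N+1), f (Fin.last N) b (Fin.last N))
        + (∑ a : Fin (N+1), f a (Fin.last N) (Fin.last N))
        - f (Fin.last N) (Fin.last N) (Fin.last N) := by
  simp only [Fin.sum_univ_castSucc, Finset.sum_add_distrib]
  abel

lemma sum_comm3 {M : Type*} [AddCommMonoid M] {ι : Type*} [Fintype ι] (f : ι → ι → ι → M) :
    ∑ p : ι, ∑ q : ι, ∑ r : ι, f p q r = ∑ q : ι, ∑ r : ι, ∑ p : ι, f p q r := by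
  rw [Finset.sum_comm]
  exact Finset.sum_congr rfl fun _ _ => Finset.sum_comm

set_option maxHeartbeats 1000000 in
theorem stmt_15 (m n : ℕ) (hm : 0 < m) (hn : 0 < n)
    {A : Type*} [Ring A] [Algebra ℂ A]
    (E : Fin (m + n + 1) → Fin (m + n + 1) → A)
    (par : Fin (m + n + 1) → ℕ)
    (hpar : ∀ p, par p = if (p : ℕ) < m then 0 else 1)
    (hE : ∀ p q r s, E p q * E r s
        - ((-1 : ℂ) ^ ((par p + par q) * (par r + par s))) • (E r s * E p q)
      = (if q = r then E p s else 0)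
        - ((-1 : ℂ) ^ ((par p + par q) * (par r + par s))) • (if p = s then E r q else 0))
    (B : Matrix (Fin (m + n + 1)) (Fin (m + n + 1)) A)
    (hB : ∀ p q, B p q = ((-1 : ℂ) ^ (par p)) • E p q)
    (Am : Matrix (Fin (m + n)) (Fin (m + n)) A)
    (hAm : ∀ p q : Fin (m + n), Am p q = B p.castSucc q.castSucc)
    (τ : ℕ → A)
    (hτ : ∀ k, τ k = (B ^ k) (Fin.last (m + n)) (Fin.last (m + n)))
    (σ₂ : A)
    (hσ₂ : σ₂ = ∑ p : Fin (m + n), ∑ q : Fin (m + n),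
        B (Fin.last (m + n)) p.castSucc * (Am ^ 2) p q * B q.castSucc (Fin.last (m + n))) :
    σ₂ = τ 4 - τ 1 * τ 3 - τ 2 * τ 2 - τ 3 * τ 1
        + τ 1 * τ 1 * τ 2 + τ 1 * τ 2 * τ 1 + τ 2 * τ 1 * τ 1
        - τ 1 * τ 1 * τ 1 * τ 1 := by
  set L := Fin.last (m + n) with hL
  set F : Fin (m+n+1) → Fin (m+n+1) → Fin (m+n+1) → A :=
    fun a b c => B L a * (B a b * (B b c * B c L)) with hF
  -- τ values
  have t1 : τ 1 = B L L := by rw [hτ, pow_one]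
  have t2 : τ 2 = ∑ a : Fin (m+n+1), B L a * B a L := by
    rw [hτ, pow_two, Matrix.mul_apply]
  have t3 : τ 3 = ∑ b : Fin (m+n+1), ∑ a : Fin (m+n+1), B L a * (B a b * B b L) := by
    rw [hτ, show (3:ℕ) = 2+1 from rfl, pow_succ, pow_two]
    simp [Matrix.mul_apply, Finset.sum_mul, mul_assoc]
  have t4 : τ 4 = ∑ c : Fin (m+n+1), ∑ b : Fin (m+n+1), ∑ a : Fin (m+n+1), F a b c := by
    rw [hτ, show (4:ℕ) = 3+1 from rfl, pow_succ, show (3:ℕ) = 2+1 from rfl, pow_succ, pow_two]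
    simp only [hF, Matrix.mul_apply, Finset.sum_mul, Finset.mul_sum, mul_assoc]
    exact Finset.sum_congr rfl fun _ _ => Finset.sum_comm
  -- σ₂ as a triple restricted sum
  have hs : σ₂ = ∑ q : Fin (m+n), ∑ r : Fin (m+n), ∑ p : Fin (m+n),
      F p.castSucc r.castSucc q.castSucc := by
    have hAm2 : ∀ p q : Fin (m+n), (Am ^ 2) p q
        = ∑ r : Fin (m+n), B p.castSucc r.castSucc * B r.castSucc q.castSucc := by
      intro p q
      rw [pow_two, Matrix.mul_apply]
      exact Finset.sum_congr rfl fun r _ => by rw [hAm, hAm]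
    have hs' : σ₂ = ∑ p : Fin (m+n), ∑ q : Fin (m+n), ∑ r : Fin (m+n),
        F p.castSucc r.castSucc q.castSucc := by
      rw [hσ₂]
      refine Finset.sum_congr rfl fun p _ => Finset.sum_congr rfl fun q _ => ?_
      rw [hAm2]
      simp [hF, Finset.sum_mul, Finset.mul_sum, mul_assoc]
    rw [hs']
    conv_lhs => rw [Finset.sum_comm]
    exact Finset.sum_congr rfl fun _ _ => Finset.sum_comm
  rw [hs, IE3 (m+n) F]
  have e13 : ∑ c : Fin (m+n+1), ∑ b : Fin (m+n+1), F L b c = τ 1 * τ 3 := by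
    rw [t1, t3]
    simp [hF, Finset.mul_sum, mul_assoc]
  have e22 : ∑ c : Fin (m+n+1), ∑ a : Fin (m+n+1), F a L c = τ 2 * τ 2 := by
    rw [t2, Finset.sum_mul_sum, Finset.sum_comm]
    simp [hF, mul_assoc]
  have e31 : ∑ b : Fin (m+n+1), ∑ a : Fin (m+n+1), F a b L = τ 3 * τ 1 := by
    rw [t1, t3, Finset.sum_mul]
    simp [hF, Finset.sum_mul, mul_assoc]
  have e112 : ∑ c : Fin (m+n+1), F L L c = τ 1 * τ 1 * τ 2 := by
    rw [t1, t2, Finset.mul_sum]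
    simp [hF, mul_assoc]
  have e121 : ∑ b : Fin (m+n+1), F L b L = τ 1 * τ 2 * τ 1 := by
    rw [t1, t2, Finset.mul_sum, Finset.sum_mul]
    simp [hF, mul_assoc]
  have e211 : ∑ a : Fin (m+n+1), F a L L = τ 2 * τ 1 * τ 1 := by
    rw [t1, t2, Finset.sum_mul, Finset.sum_mul]
    simp [hF, mul_assoc]
  have e1111 : F L L L = τ 1 * τ 1 * τ 1 * τ 1 := by
    rw [t1]; simp [hF, mul_assoc]
  rw [t4, e13, e22, e31, e112, e121, e211, e1111]
end

section
/- Let A be an associative unital ℂ-algebra containing elements E_{pq} for 1 ≤ p,q ≤ m+n+1 satisfying the graded gl(m|n+1) commutation relations. Define ℬ^p_q = (−1)^{(p)} E_{pq}, τ_k = (ℬ^k)^{m+n+1}_{m+n+1}, Î_k = Σ_{p=1}^{m+n+1} (−1)^{(p)}(ℬ^k)^p_p, and I_k = Σ_{p=1}^{m+n} (−1)^{(p)}(𝒜^k)^p_p where 𝒜 is the upper-left (m+n)×(m+n) submatrix of ℬ. Then τ_1 = I_1 − Î_1, and 2τ_2 = (I_2 − Î_2) + (I_1 − Î_1)^2 −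 I_1 + (m−n)(I_1 − Î_1). -/
open Finset

theorem stmt_16 (m n : ℕ) (hm : 0 < m) (hn : 0 < n)
    {A : Type*} [Ring A] [Algebra ℂ A]
    (E : Fin (m + n + 1) → Fin (m + n + 1) → A)
    (par : Fin (m + n + 1) → ℕ)
    (hpar : ∀ p, par p = if (p : ℕ) < m then 0 else 1)
    (hE : ∀ p q r s, E p q * E r s
        - ((-1 : ℂ) ^ ((par p + par q) * (par r + par s))) • (E r s * E p q)
      = (if q = r then E p s else 0)
        - ((-1 : ℂ) ^ ((par p + par q) * (par r + par s))) • (if p = s then E r q else 0))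
    (B : Matrix (Fin (m + n + 1)) (Fin (m + n + 1)) A)
    (hB : ∀ p q, B p q = ((-1 : ℂ) ^ (par p)) • E p q)
    (Am : Matrix (Fin (m + n)) (Fin (m + n)) A)
    (hAm : ∀ p q : Fin (m + n), Am p q = B p.castSucc q.castSucc)
    (τ Ih I : ℕ → A)
    (hτ : ∀ k, τ k = (B ^ k) (Fin.last (m + n)) (Fin.last (m + n)))
    (hIh : ∀ k, Ih k = ∑ p, ((-1 : ℂ) ^ (par p)) • (B ^ k) p p)
    (hI : ∀ k, I k = ∑ p : Fin (m + n), ((-1 : ℂ) ^ (par p.castSucc)) • (Am ^ k) p p) :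
    τ 1 = I 1 - Ih 1
      ∧ (2 : ℂ) • τ 2 = (I 2 - Ih 2) + (I 1 - Ih 1) ^ 2 - I 1
          + ((m : ℂ) - n) • (I 1 - Ih 1) := by
  set L : Fin (m + n + 1) := Fin.last (m + n) with hLdef
  have hparL : par L = 1 := by
    rw [hpar]; simp [hLdef, Fin.val_last]
  have hpar01 : ∀ p : Fin (m + n + 1), par p = 0 ∨ par p = 1 := by
    intro p; rw [hpar]; split <;> simp
  have hsq : ∀ p : Fin (m + n + 1), ((-1 : ℂ) ^ (par p)) * ((-1 : ℂ) ^ (par p)) = 1 := by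
    intro p; rcases hpar01 p with h | h <;> rw [h] <;> norm_num
  have hB2 : ∀ p q, (B ^ 2) p q = ∑ r, B p r * B r q := by
    intro p q; rw [pow_two, Matrix.mul_apply]
  -- Part 1
  have hτ1 : τ 1 = B L L := by rw [hτ 1, pow_one]
  have hI1 : I 1 = ∑ p : Fin (m + n),
      ((-1 : ℂ) ^ (par p.castSucc)) • B p.castSucc p.castSucc := by
    rw [hI]
    exact Finset.sum_congr rfl fun p _ => by rw [pow_one, hAm]
  have hIh1 : Ih 1 = I 1 + ((-1 : ℂ) ^ (par L)) • B L L := by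
    rw [hIh, hI1]
    simp only [pow_one]
    rw [Fin.sum_univ_castSucc]
  have part1 : τ 1 = I 1 - Ih 1 := by
    rw [hτ1, hIh1, hparL, pow_one, neg_smul, one_smul]; abel
  refine ⟨part1, ?_⟩
  -- Part 2
  have hτ2 : τ 2 = (∑ q : Fin (m + n), B L q.castSucc * B q.castSucc L) + B L L * B L L := by
    rw [hτ 2, hB2, Fin.sum_univ_castSucc]
  have hA2 : ∀ p : Fin (m + n), (Am ^ 2) p p
      = ∑ q : Fin (m + n), B p.castSucc q.castSucc * B q.castSucc p.castSucc := by
    intro p; rw [pow_two, Matrix.mul_apply]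
    exact Finset.sum_congr rfl fun q _ => by rw [hAm, hAm]
  have hIh2 : Ih 2 = I 2 + (∑ p : Fin (m + n),
      ((-1 : ℂ) ^ (par p.castSucc)) • (B p.castSucc L * B L p.castSucc)) - τ 2 := by
    rw [hIh, hI, hτ 2, Fin.sum_univ_castSucc, hparL, pow_one, neg_smul, one_smul]
    have hB2pp : ∀ p : Fin (m + n), (B ^ 2) p.castSucc p.castSucc
        = (Am ^ 2) p p + B p.castSucc L * B L p.castSucc := by
      intro p; rw [hB2, hA2, Fin.sum_univ_castSucc]
    rw [Finset.sum_congr rfl fun p _ => by rw [hB2pp p, smul_add]]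
    rw [Finset.sum_add_distrib]
    abel
  have key : ∀ p : Fin (m + n + 1),
      ((-1 : ℂ) ^ (par p)) • (E L p * E p L) + E p L * E L p
        = E p p + ((-1 : ℂ) ^ (par p)) • E L L := by
    intro p
    have h := hE p L L p
    rw [hparL, if_pos rfl, if_pos rfl] at h
    rcases hpar01 p with h0 | h1
    · rw [h0] at h ⊢
      norm_num at h ⊢
      rw [add_comm (E L p * E p L)]
      exact h
    · rw [h1] at h ⊢
      norm_num at h ⊢
      rw [neg_add_eq_sub, ← sub_eq_add_neg]
      exact h
  have hI1E : I 1 = ∑ p : Fin (m + n), E p.castSucc p.castSucc := by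
    rw [hI1]
    refine Finset.sum_congr rfl fun p _ => ?_
    rw [hB, smul_smul, hsq, one_smul]
  have hcsum : ∑ p : Fin (m + n), ((-1 : ℂ) ^ (par p.castSucc)) = (m : ℂ) - (n : ℂ) := by
    have h : ∀ p : Fin (m + n), ((-1 : ℂ) ^ (par p.castSucc))
        = if (p : ℕ) < m then 1 else -1 := by
      intro p; rw [hpar]; simp only [Fin.coe_castSucc]; split <;> norm_num
    rw [Finset.sum_congr rfl fun p _ => h p, Fin.sum_univ_add]
    simp [Fin.is_lt]
    ring
  have hmain : (∑ q : Fin (m + n), B L q.castSucc * B q.castSucc L)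
      + (∑ p : Fin (m + n), ((-1 : ℂ) ^ (par p.castSucc)) • (B p.castSucc L * B L p.castSucc))
      = -(∑ p : Fin (m + n), E p.castSucc p.castSucc) + ((m : ℂ) - n) • B L L := by
    rw [← Finset.sum_add_distrib]
    have step : ∀ p : Fin (m + n),
        B L p.castSucc * B p.castSucc L
          + ((-1 : ℂ) ^ (par p.castSucc)) • (B p.castSucc L * B L p.castSucc)
        = -(E p.castSucc p.castSucc + ((-1 : ℂ) ^ (par p.castSucc)) • E L L) := by
      intro p
      have aux : ∀ (c : ℂ) (x y : A), c * c = 1 →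
          ((-1 : ℂ) • x) * (c • y) + c • ((c • y) * ((-1 : ℂ) • x))
            = -(c • (x * y) + y * x) := by
        intro c x y h
        simp only [smul_mul_assoc, mul_smul_comm, smul_smul]
        match_scalars
        · ring
        · linear_combination -h
      rw [hB L, hB p.castSucc, hparL, pow_one,
        aux _ _ _ (hsq p.castSucc), key p.castSucc]
    rw [Finset.sum_congr rfl fun p _ => step p]
    rw [Finset.sum_neg_distrib, Finset.sum_add_distrib, ← Finset.sum_smul, hcsum]
    rw [hB L L, hparL, pow_one, neg_smul, one_smul, smul_neg]
    abel
  rw [← part1, hτ1, hIh2, hτ2, hI1E, sq]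
  have hS : (∑ p : Fin (m + n), ((-1 : ℂ) ^ (par p.castSucc)) • (B p.castSucc L * B L p.castSucc))
      = -(∑ p : Fin (m + n), E p.castSucc p.castSucc) + ((m : ℂ) - n) • B L L
        - (∑ q : Fin (m + n), B L q.castSucc * B q.castSucc L) := by
    rw [← hmain]; abel
  rw [hS, two_smul]
  abel
end
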